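/- arXiv:2602.16048 — 2 statements merged into one kernel-verified Lean document; each statement's English description precedes it below -/
import Mathlib

section
/- Let n ≥ 2 and let φ : [0, ∞) → ℝ be continuous with φ(0) = 1, φ(s) > 1 for all s > 0, and differentiable on (0, ∞) with φ'(s) = (φ(s)² − φ(s)^{4−2n})^{1/2} for all s > 0 (the profile of the n-dimensional catenoid in conformal coordinates). Then there exist constants A > 0 and C > 0 such that |e^{−s} φ(s) − A| ≤ C e^{(2−2n)s} for all s ≥ 1. In particular, e^{−s}φ(s) → A as s → ∞, i.e. φ(s) grows like A e^{s}. -/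
/-!
Write `g(s) = e^{-s} φ(s)`, so that `g' = -e^{-s} (φ - √(φ² - φ^p))` with `p = 4 - 2n ≤ 0`.
The deficit `φ - √(φ² - φ^p)` lies between `0` and `φ^{p-1}`. Hence `g` is nonincreasing,
and since `φ^{p-1} ≤ 1` the function `g(s) - e^{-s}` is nondecreasing, which bounds `g` below
by `m = e^{-1}(φ(1) - 1) > 0`. Then `φ ≥ m e^s`, so `-g' ≤ m^{p-1} e^{(p-2)s}` and
`g(s) - C e^{(p-2)s}` is nondecreasing for `C = m^{p-1}/(2-p)`. Squeezed between these two
monotone functions, `g` stays within `C e^{(p-2)s}` of its infimum `A ≥ m`.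
-/

open Real Set

theorem sub_sqrt_sq_sub_le_div {x c : ℝ} (hx : 0 < x) (hc : 0 ≤ c) :
    x - √(x ^ 2 - c) ≤ c / x := by
  rw [le_div_iff₀ hx]
  have hr := Real.sqrt_nonneg (x ^ 2 - c)
  rcases le_total (x ^ 2 - c) 0 with hneg | hpos
  · rw [Real.sqrt_eq_zero'.mpr hneg]
    nlinarith
  · have hsq := Real.sq_sqrt hpos
    have hle : √(x ^ 2 - c) ≤ x := by nlinarith
    nlinarith

theorem monotoneOn_Ici_of_hasDerivAt_nonneg {f f' : ℝ → ℝ} {a : ℝ}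
    (hf : ∀ x ∈ Ici a, HasDerivAt f (f' x) x) (hf' : ∀ x ∈ Ioi a, 0 ≤ f' x) :
    MonotoneOn f (Ici a) :=
  monotoneOn_of_hasDerivWithinAt_nonneg (convex_Ici a)
    (fun x hx ↦ (hf x hx).continuousAt.continuousWithinAt)
    (fun x hx ↦ (hf x (interior_subset hx)).hasDerivWithinAt)
    (fun x hx ↦ hf' x (by rwa [interior_Ici] at hx))

theorem antitoneOn_Ici_of_hasDerivAt_nonpos {f f' : ℝ → ℝ} {a : ℝ}
    (hf : ∀ x ∈ Ici a, HasDerivAt f (f' x) x) (hf' : ∀ x ∈ Ioi a, f' x ≤ 0) :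
    AntitoneOn f (Ici a) :=
  antitoneOn_of_hasDerivWithinAt_nonpos (convex_Ici a)
    (fun x hx ↦ (hf x hx).continuousAt.continuousWithinAt)
    (fun x hx ↦ (hf x (interior_subset hx)).hasDerivWithinAt)
    (fun x hx ↦ hf' x (by rwa [interior_Ici] at hx))

theorem sub_sqrt_sq_sub_rpow_le {x : ℝ} (hx : 0 < x) (p : ℝ) :
    x - √(x ^ 2 - x ^ p) ≤ x ^ (p - 1) := by
  rw [Real.rpow_sub_one hx.ne']
  exact sub_sqrt_sq_sub_le_div hx (Real.rpow_pos_of_pos hx p).le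

section Squeeze

variable {g h : ℝ → ℝ} {a : ℝ}

theorem sub_le_of_antitoneOn_of_monotoneOn_sub (hg : AntitoneOn g (Ici a))
    (hgh : MonotoneOn (g - h) (Ici a)) (hh : ∀ x ∈ Ici a, 0 ≤ h x) {s t : ℝ}
    (hs : s ∈ Ici a) (ht : t ∈ Ici a) : g s - h s ≤ g t := by
  rcases le_total s t with hst | hts
  · have := hgh hs ht hst
    simp only [Pi.sub_apply] at this
    linarith [hh t ht]
  · linarith [hg ht hs hts, hh s hs]

theorem abs_sub_le_of_isGLB {A : ℝ} (hA : IsGLB (g '' Ici a) A) (hg : AntitoneOn g (Ici a))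
    (hgh : MonotoneOn (g - h) (Ici a)) (hh : ∀ x ∈ Ici a, 0 ≤ h x) {s : ℝ}
    (hs : s ∈ Ici a) : |g s - A| ≤ h s := by
  have hAg : A ≤ g s := hA.1 ⟨s, hs, rfl⟩
  have hgA : g s - h s ≤ A := hA.2 <| by
    rintro _ ⟨t, ht, rfl⟩
    exact sub_le_of_antitoneOn_of_monotoneOn_sub hg hgh hh hs ht
  rw [abs_of_nonneg (sub_nonneg.mpr hAg)]
  linarith

end Squeeze

theorem hasDerivAt_exp_neg_mul {φ : ℝ → ℝ} {φ' s : ℝ} (hφ : HasDerivAt φ φ' s) :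
    HasDerivAt (fun t ↦ exp (-t) * φ t) (-(exp (-s) * (φ s - φ'))) s :=
  ((hasDerivAt_neg s).exp.fun_mul hφ).congr_deriv (by ring)

section CatenoidProfile

variable {φ : ℝ → ℝ} {p a : ℝ}

theorem antitoneOn_exp_neg_mul_profile (hgt : ∀ s, 0 < s → 1 < φ s)
    (hode : ∀ s, 0 < s → HasDerivAt φ (√(φ s ^ 2 - φ s ^ p)) s) (ha : 0 < a) :
    AntitoneOn (fun s ↦ exp (-s) * φ s) (Ici a) := by
  refine antitoneOn_Ici_of_hasDerivAt_nonpos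
    (fun x hx ↦ hasDerivAt_exp_neg_mul (hode x (ha.trans_le hx))) fun x hx ↦ ?_
  have hφ : 0 < φ x := one_pos.trans (hgt x (ha.trans hx))
  have hsqrt : √(φ x ^ 2 - φ x ^ p) ≤ φ x :=
    Real.sqrt_le_iff.mpr ⟨hφ.le, by linarith [Real.rpow_pos_of_pos hφ p]⟩
  have := mul_nonneg (exp_pos (-x)).le (sub_nonneg.mpr hsqrt)
  linarith

theorem exp_neg_mul_profile_lower_bound (hgt : ∀ s, 0 < s → 1 < φ s)
    (hode : ∀ s, 0 < s → HasDerivAt φ (√(φ s ^ 2 - φ s ^ p)) s)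
    (hp : p ≤ 1) (ha : 0 < a) {s : ℝ} (hs : a ≤ s) :
    exp (-a) * (φ a - 1) ≤ exp (-s) * φ s := by
  have hmono : MonotoneOn ((fun s ↦ exp (-s) * φ s) - fun s ↦ exp (-s)) (Ici a) := by
    refine monotoneOn_Ici_of_hasDerivAt_nonneg
      (fun x hx ↦ (hasDerivAt_exp_neg_mul (hode x (ha.trans_le hx))).sub (hasDerivAt_neg x).exp)
      fun x hx ↦ ?_
    have hx0 : 0 < x := ha.trans hx
    have hdef : φ x - √(φ x ^ 2 - φ x ^ p) ≤ 1 :=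
      (sub_sqrt_sq_sub_rpow_le (one_pos.trans (hgt x hx0)) p).trans
        (Real.rpow_le_one_of_one_le_of_nonpos (hgt x hx0).le (by linarith))
    have := mul_le_mul_of_nonneg_left hdef (exp_pos (-x)).le
    linarith
  have := sub_le_of_antitoneOn_of_monotoneOn_sub (antitoneOn_exp_neg_mul_profile hgt hode ha)
    hmono (fun x _ ↦ (exp_pos (-x)).le) self_mem_Ici (show s ∈ Ici a from hs)
  linarith [exp_pos (-s)]

theorem exp_neg_mul_profile_deficit_le (hp : p ≤ 1) {m : ℝ} (hm : 0 < m)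
    {s : ℝ} (hlow : m ≤ exp (-s) * φ s) :
    exp (-s) * (φ s - √(φ s ^ 2 - φ s ^ p)) ≤ m ^ (p - 1) * exp ((p - 2) * s) := by
  have hgrowth : m * exp s ≤ φ s := by
    have := mul_le_mul_of_nonneg_right hlow (exp_pos s).le
    rwa [mul_right_comm, ← exp_add, neg_add_cancel, exp_zero, one_mul] at this
  have hpow : φ s ^ (p - 1) ≤ m ^ (p - 1) * exp ((p - 1) * s) := by
    calc φ s ^ (p - 1) ≤ (m * exp s) ^ (p - 1) :=
          Real.rpow_le_rpow_of_nonpos (by positivity) hgrowth (by linarith)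
      _ = m ^ (p - 1) * exp ((p - 1) * s) := by
          rw [Real.mul_rpow hm.le (exp_pos s).le, ← exp_mul, mul_comm s]
  calc exp (-s) * (φ s - √(φ s ^ 2 - φ s ^ p))
      ≤ exp (-s) * (m ^ (p - 1) * exp ((p - 1) * s)) :=
        have hφ : 0 < φ s := (by positivity : 0 < m * exp s).trans_le hgrowth
        mul_le_mul_of_nonneg_left ((sub_sqrt_sq_sub_rpow_le hφ p).trans hpow) (exp_pos _).le
    _ = m ^ (p - 1) * exp ((p - 2) * s) := by
        rw [mul_left_comm, ← exp_add]
        ring_nf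

theorem monotoneOn_exp_neg_mul_profile_sub
    (hode : ∀ s, 0 < s → HasDerivAt φ (√(φ s ^ 2 - φ s ^ p)) s)
    (hp : p ≤ 1) (ha : 0 < a) {m : ℝ} (hm : 0 < m)
    (hlow : ∀ s ∈ Ici a, m ≤ exp (-s) * φ s) :
    MonotoneOn ((fun s ↦ exp (-s) * φ s) - fun s ↦ m ^ (p - 1) / (2 - p) * exp ((p - 2) * s))
      (Ici a) := by
  refine monotoneOn_Ici_of_hasDerivAt_nonneg
    (fun x hx ↦ (hasDerivAt_exp_neg_mul (hode x (ha.trans_le hx))).sub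
      (((hasDerivAt_id x).const_mul (p - 2)).exp.const_mul _)) fun x hx ↦ ?_
  have hdef := exp_neg_mul_profile_deficit_le hp hm (hlow x (mem_Ici.mpr (le_of_lt hx)))
  have hcoef : m ^ (p - 1) / (2 - p) * (exp ((p - 2) * x) * (p - 2))
      = -(m ^ (p - 1) * exp ((p - 2) * x)) := by
    field_simp [(by linarith : 2 - p ≠ 0)]
    ring
  simp only [id, mul_one, hcoef]
  linarith

end CatenoidProfile

theorem catenoid_profile_asymptotics_general (n : ℕ) (hn : 2 ≤ n) (φ : ℝ → ℝ)
    (hgt : ∀ s : ℝ, 0 < s → 1 < φ s)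
    (hode : ∀ s : ℝ, 0 < s →
      HasDerivAt φ (Real.sqrt ((φ s) ^ 2 - (φ s) ^ ((4 : ℝ) - 2 * n))) s) :
    ∃ A : ℝ, 0 < A ∧ ∃ C : ℝ, 0 < C ∧ ∀ s : ℝ, 1 ≤ s →
      |Real.exp (-s) * φ s - A| ≤ C * Real.exp (((2 : ℝ) - 2 * n) * s) := by
  set p : ℝ := 4 - 2 * n
  have hp : p ≤ 1 := by
    have : (2 : ℝ) ≤ n := by exact_mod_cast hn
    linarith
  set m := exp (-1) * (φ 1 - 1)
  have hm : 0 < m := mul_pos (exp_pos _) (sub_pos.mpr (hgt 1 one_pos))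
  have hlow : ∀ s ∈ Ici (1 : ℝ), m ≤ exp (-s) * φ s := fun s hs ↦
    exp_neg_mul_profile_lower_bound hgt hode hp one_pos hs
  have hlowerBound : m ∈ lowerBounds ((fun s ↦ exp (-s) * φ s) '' Ici 1) := by
    rintro _ ⟨s, hs, rfl⟩
    exact hlow s hs
  obtain ⟨A, hA⟩ := Real.exists_isGLB ((nonempty_Ici (a := 1)).image _) ⟨m, hlowerBound⟩
  have hmA : m ≤ A := hA.2 hlowerBound
  have hC : 0 < m ^ (p - 1) / (2 - p) := div_pos (rpow_pos_of_pos hm _) (by linarith)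
  refine ⟨A, hm.trans_le hmA, _, hC, fun s hs ↦ ?_⟩
  rw [show (2 : ℝ) - 2 * n = p - 2 by ring]
  exact abs_sub_le_of_isGLB hA (antitoneOn_exp_neg_mul_profile hgt hode one_pos)
    (monotoneOn_exp_neg_mul_profile_sub hode hp one_pos hm hlow)
    (fun x _ ↦ (mul_pos hC (exp_pos _)).le) hs

/-- **Asymptotics of the catenoid profile.** Let `n ≥ 2` and let `φ : [0,∞) → ℝ` be the
conformal profile function of the `n`-dimensional catenoid: `φ` is continuous on
`[0,∞)`, `φ 0 = 1`, `φ s > 1` for `s > 0`, and for `s > 0` it satisfies the ODE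
`φ' = √(φ² − φ^{4−2n})`. Then there are constants `A > 0` and `C > 0` with
`|e^{−s} φ(s) − A| ≤ C e^{(2−2n)s}` for all `s ≥ 1`; in particular `φ(s)` grows like
`A e^s`. -/
theorem catenoid_profile_asymptotics (n : ℕ) (hn : 2 ≤ n) (φ : ℝ → ℝ)
    (hcont : ContinuousOn φ (Set.Ici 0))
    (h0 : φ 0 = 1)
    (hgt : ∀ s : ℝ, 0 < s → 1 < φ s)
    (hode : ∀ s : ℝ, 0 < s →
      HasDerivAt φ (Real.sqrt ((φ s) ^ 2 - (φ s) ^ ((4 : ℝ) - 2 * n))) s) :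
    ∃ A : ℝ, 0 < A ∧ ∃ C : ℝ, 0 < C ∧ ∀ s : ℝ, 1 ≤ s →
      |Real.exp (-s) * φ s - A| ≤ C * Real.exp (((2 : ℝ) - 2 * n) * s) :=
  catenoid_profile_asymptotics_general n hn φ hgt hode
end

section
/- Let n ≥ 3. There exist constants C > 0 and ε₀ ∈ (0,1) such that for every ε ∈ (0, ε₀] the function v_ε(x) := (ε/(n−2)) ‖x‖^{2−n}, defined on the annulus {x ∈ ℝ^n : ε^{3/(3n−2)} ≤ ‖x‖ ≤ 1}, satisfies |∇v_ε(x)| ≤ 1 and the mean curvature of its graph satisfies |H[v_ε](x)| ≤ C ε³ ‖x‖^{2−3n} for every x in this annulus. -/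
/-!
For a radial function `u = φ(‖x‖)` the field `∇u / √(1 + |∇u|²)` is `(Φ(r) / r) x` with
`Φ = φ' / √(1 + φ'²)`, so its divergence is `Φ'(r) + (n - 1) Φ(r) / r`. For the Green's profile
the slope `a = ε r^{1-n}` satisfies `r a' = (1 - n) a`; the linear parts of the two terms cancel
(the Green's function is harmonic) and what is left is `H = -(n - 1) a³ / (r (1 + a²)^{3/2})`,
whence `|H| ≤ (n - 1) ε³ r^{2-3n}`. On the annulus `r ≥ ε^{3/(3n-2)}` the slope is at most
`ε^{1/(3n-2)} ≤ 1`.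
-/

open Set

noncomputable section

/-- Euclidean space `ℝ^n`. -/
abbrev Euc (n : ℕ) : Type := EuclideanSpace ℝ (Fin n)

/-- The `i`-th standard basis vector of `ℝ^n`. -/
def esingle {n : ℕ} (i : Fin n) : Euc n := EuclideanSpace.single i 1

/-- Partial derivative of `u` in the `i`-th coordinate direction at `x`. -/
def pderiv' {n : ℕ} (u : Euc n → ℝ) (i : Fin n) (x : Euc n) : ℝ :=
  fderiv ℝ u x (esingle i)

/-- Mean curvature operator of a graph:
`H[v] = div(∇v / √(1+|∇v|²)) = Σᵢ ∂ᵢ(∂ᵢv / (1+|∇v|²)^{1/2})`. -/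
def graphMeanCurv {n : ℕ} (u : Euc n → ℝ) (x : Euc n) : ℝ :=
  ∑ i : Fin n,
    pderiv' (fun y => pderiv' u i y / Real.sqrt (1 + ‖gradient u y‖ ^ 2)) i x

open Topology

section Radial

variable {E : Type*} [NormedAddCommGroup E] [InnerProductSpace ℝ E]

theorem hasFDerivAt_norm_of_ne_zero {x : E} (hx : x ≠ 0) :
    HasFDerivAt (fun y : E => ‖y‖) (‖x‖⁻¹ • innerSL ℝ x) x := by
  have hsqrt := (hasStrictFDerivAt_norm_sq x).hasFDerivAt.sqrt
    (pow_ne_zero 2 (norm_ne_zero_iff.mpr hx))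
  simp only [Real.sqrt_sq (norm_nonneg _)] at hsqrt
  convert hsqrt using 1
  ext w
  simp only [smul_apply, innerSL_apply_apply, smul_eq_mul, nsmul_eq_mul]
  field_simp
  ring

theorem HasDerivAt.hasFDerivAt_comp_norm {φ : ℝ → ℝ} {d : ℝ} {x : E} (hx : x ≠ 0)
    (hφ : HasDerivAt φ d ‖x‖) :
    HasFDerivAt (fun y : E => φ ‖y‖) ((d / ‖x‖) • innerSL ℝ x) x := by
  rw [div_eq_mul_inv, ← smul_smul]
  exact hφ.comp_hasFDerivAt x (hasFDerivAt_norm_of_ne_zero hx)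

theorem HasDerivAt.hasGradientAt_comp_norm [CompleteSpace E] {φ : ℝ → ℝ} {d : ℝ} {x : E}
    (hx : x ≠ 0) (hφ : HasDerivAt φ d ‖x‖) :
    HasGradientAt (fun y : E => φ ‖y‖) ((d / ‖x‖) • x) x := by
  rw [hasGradientAt_iff_hasFDerivAt]
  refine (hφ.hasFDerivAt_comp_norm hx).congr_fderiv ?_
  ext w
  simp

theorem HasDerivAt.norm_gradient_comp_norm [CompleteSpace E] {φ : ℝ → ℝ} {d : ℝ} {x : E}
    (hx : x ≠ 0) (hφ : HasDerivAt φ d ‖x‖) :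
    ‖gradient (fun y : E => φ ‖y‖) x‖ = |d| := by
  rw [(hφ.hasGradientAt_comp_norm hx).gradient, norm_smul, norm_div, Real.norm_eq_abs,
    norm_norm, div_mul_cancel₀ _ (norm_ne_zero_iff.mpr hx)]

end Radial

section Coordinates

variable {n : ℕ}

theorem HasGradientAt.pderiv'_eq {u : Euc n → ℝ} {g x : Euc n} (h : HasGradientAt u g x)
    (i : Fin n) : pderiv' u i x = g i := by
  simp [pderiv', h.fderiv_apply, esingle, EuclideanSpace.inner_single_right]

theorem sum_pderiv'_radial_field {ψ : ℝ → ℝ} {d : ℝ} {x : Euc n} (hx : x ≠ 0)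
    (hψ : HasDerivAt ψ d ‖x‖) :
    ∑ i, pderiv' (fun y => ψ ‖y‖ * y i) i x = n * ψ ‖x‖ + ‖x‖ * d := by
  have hterm : ∀ i, pderiv' (fun y => ψ ‖y‖ * y i) i x = ψ ‖x‖ + d / ‖x‖ * x i ^ 2 := by
    intro i
    have hprod : HasFDerivAt (fun y : Euc n => ψ ‖y‖ * y i) _ x :=
      (hψ.hasFDerivAt_comp_norm hx).mul (EuclideanSpace.proj (𝕜 := ℝ) (ι := Fin n) i).hasFDerivAt
    rw [pderiv', hprod.fderiv]
    simp only [esingle, add_apply, smul_apply, PiLp.proj_apply, PiLp.single_eq_same, smul_eq_mul,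
      mul_one, coe_innerSL_apply, EuclideanSpace.inner_single_right, Real.ringHom_apply, one_mul,
      add_right_inj]
    ring
  rw [Finset.sum_congr rfl fun i _ => hterm i, Finset.sum_add_distrib, ← Finset.mul_sum,
    ← EuclideanSpace.real_norm_sq_eq]
  simp only [Finset.sum_const, Finset.card_univ, Fintype.card_fin, nsmul_eq_mul, add_right_inj]
  field_simp

theorem graphMeanCurv_comp_norm {φ φ' : ℝ → ℝ} {Φ' : ℝ} {x : Euc n} (hx : x ≠ 0)
    (hφ : ∀ t, 0 < t → HasDerivAt φ (φ' t) t)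
    (hΦ : HasDerivAt (fun t => φ' t / √(1 + φ' t ^ 2)) Φ' ‖x‖) :
    graphMeanCurv (fun y => φ ‖y‖) x
      = Φ' + (n - 1) * (φ' ‖x‖ / √(1 + φ' ‖x‖ ^ 2)) / ‖x‖ := by
  set Φ : ℝ → ℝ := fun t => φ' t / √(1 + φ' t ^ 2)
  have hr : ‖x‖ ≠ 0 := norm_ne_zero_iff.mpr hx
  have hψ : HasDerivAt (fun t => Φ t / t) ((Φ' * ‖x‖ - Φ ‖x‖ * 1) / ‖x‖ ^ 2) ‖x‖ :=
    hΦ.div (hasDerivAt_id _) hr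
  have hfield : ∀ i, (fun y => pderiv' (fun y => φ ‖y‖) i y
      / √(1 + ‖gradient (fun y => φ ‖y‖) y‖ ^ 2)) =ᶠ[𝓝 x] fun y => Φ ‖y‖ / ‖y‖ * y i := by
    intro i
    filter_upwards [eventually_ne_nhds hx] with y hy
    have hdy := hφ ‖y‖ (norm_pos_iff.mpr hy)
    rw [(hdy.hasGradientAt_comp_norm hy).pderiv'_eq, hdy.norm_gradient_comp_norm hy, sq_abs]
    simp only [PiLp.smul_apply, smul_eq_mul, Φ]
    ring
  have hdiv : graphMeanCurv (fun y => φ ‖y‖) x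
      = ∑ i, pderiv' (fun y => Φ ‖y‖ / ‖y‖ * y i) i x :=
    Finset.sum_congr rfl fun i _ => by rw [pderiv', pderiv', (hfield i).fderiv_eq]
  rw [hdiv, sum_pderiv'_radial_field hx hψ]
  simp only [Φ]
  field_simp
  ring

end Coordinates

theorem hasDerivAt_div_sqrt_one_add_sq (a : ℝ) :
    HasDerivAt (fun a => a / √(1 + a ^ 2)) (1 / √(1 + a ^ 2) ^ 3) a := by
  have hpos : 0 < 1 + a ^ 2 := by positivity
  have hsq := Real.sq_sqrt hpos.le
  have hs0 := (Real.sqrt_pos.mpr hpos).ne'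
  have hs : HasDerivAt (fun a => √(1 + a ^ 2)) (a / √(1 + a ^ 2)) a :=
    (((hasDerivAt_pow 2 a).const_add 1).sqrt hpos.ne').congr_deriv (by field_simp; norm_num)
  refine ((hasDerivAt_id' a).div hs hs0).congr_deriv ?_
  field_simp
  linear_combination hsq

section Green

variable {m ε : ℝ}

theorem hasDerivAt_green_profile (hm : m ≠ 2) {t : ℝ} (ht : 0 < t) :
    HasDerivAt (fun t => ε / (m - 2) * t ^ (2 - m)) (-(ε * t ^ (1 - m))) t := by
  refine ((Real.hasDerivAt_rpow_const (p := 2 - m) (Or.inl ht.ne')).const_mul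
    (ε / (m - 2))).congr_deriv ?_
  have : m - 2 ≠ 0 := sub_ne_zero.mpr hm
  rw [show 2 - m - 1 = 1 - m by ring]
  field_simp
  ring

theorem green_slope_le_one (hm : 1 ≤ m) (hε : 0 < ε) (hε₁ : ε ≤ 1) {r : ℝ}
    (hr : ε ^ (3 / (3 * m - 2)) ≤ r) : ε * r ^ (1 - m) ≤ 1 := by
  have hρ : 0 < ε ^ (3 / (3 * m - 2)) := Real.rpow_pos_of_pos hε _
  have hexp : 1 + 3 / (3 * m - 2) * (1 - m) = 1 / (3 * m - 2) := by
    field_simp [show 3 * m - 2 ≠ 0 by linarith]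
    ring
  calc ε * r ^ (1 - m) ≤ ε * (ε ^ (3 / (3 * m - 2))) ^ (1 - m) :=
        mul_le_mul_of_nonneg_left (Real.rpow_le_rpow_of_nonpos hρ hr (by linarith)) hε.le
    _ = ε ^ (1 / (3 * m - 2)) := by
        rw [← Real.rpow_mul hε.le, ← hexp, Real.rpow_add hε, Real.rpow_one]
    _ ≤ 1 := Real.rpow_le_one hε.le hε₁ (div_nonneg zero_le_one (by linarith))

end Green

section GreenGraph

variable {n : ℕ} {ε : ℝ}

theorem norm_gradient_green (hn : (n : ℝ) ≠ 2) (hε : 0 ≤ ε) {x : Euc n} (hx : x ≠ 0) :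
    ‖gradient (fun y : Euc n => ε / ((n : ℝ) - 2) * ‖y‖ ^ ((2 : ℝ) - n)) x‖
      = ε * ‖x‖ ^ (1 - (n : ℝ)) := by
  rw [(hasDerivAt_green_profile hn (norm_pos_iff.mpr hx)).norm_gradient_comp_norm hx, abs_neg,
    abs_of_nonneg (by positivity)]

theorem graphMeanCurv_green (hn : (n : ℝ) ≠ 2) {x : Euc n} (hx : x ≠ 0) :
    graphMeanCurv (fun y : Euc n => ε / ((n : ℝ) - 2) * ‖y‖ ^ ((2 : ℝ) - n)) x
      = -((n - 1) * (ε * ‖x‖ ^ (1 - (n : ℝ))) ^ 3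
          / (‖x‖ * √(1 + (ε * ‖x‖ ^ (1 - (n : ℝ))) ^ 2) ^ 3)) := by
  have hr := norm_pos_iff.mpr hx
  have hslope : HasDerivAt (fun t => ε * t ^ (1 - (n : ℝ)))
      ((1 - n) * (ε * ‖x‖ ^ (1 - (n : ℝ))) / ‖x‖) ‖x‖ := by
    refine ((Real.hasDerivAt_rpow_const (Or.inl hr.ne')).const_mul ε).congr_deriv ?_
    rw [Real.rpow_sub_one hr.ne']
    ring
  have hΦ : HasDerivAt
      (fun t => -(ε * t ^ (1 - (n : ℝ))) / √(1 + (-(ε * t ^ (1 - (n : ℝ)))) ^ 2))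
      (-(1 / √(1 + (ε * ‖x‖ ^ (1 - (n : ℝ))) ^ 2) ^ 3
        * ((1 - n) * (ε * ‖x‖ ^ (1 - (n : ℝ))) / ‖x‖))) ‖x‖ := by
    simp only [neg_sq, neg_div]
    exact ((hasDerivAt_div_sqrt_one_add_sq _).comp ‖x‖ hslope).neg
  rw [graphMeanCurv_comp_norm hx (fun t ht => hasDerivAt_green_profile hn ht) hΦ]
  generalize ε * ‖x‖ ^ (1 - (n : ℝ)) = a
  have hpos : 0 < 1 + a ^ 2 := by positivity
  have hsq := Real.sq_sqrt hpos.le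
  have hs := (Real.sqrt_pos.mpr hpos).ne'
  field_simp
  linear_combination (-(a * (n - 1))) * hsq

theorem abs_graphMeanCurv_green_le (hn : (n : ℝ) ≠ 2) (hε : 0 ≤ ε) {x : Euc n} (hx : x ≠ 0) :
    |graphMeanCurv (fun y : Euc n => ε / ((n : ℝ) - 2) * ‖y‖ ^ ((2 : ℝ) - n)) x|
      ≤ |(n : ℝ) - 1| * ε ^ 3 * ‖x‖ ^ ((2 : ℝ) - 3 * n) := by
  have hr := norm_pos_iff.mpr hx
  have hpow : (ε * ‖x‖ ^ (1 - (n : ℝ))) ^ 3 / ‖x‖ = ε ^ 3 * ‖x‖ ^ ((2 : ℝ) - 3 * n) := by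
    rw [mul_pow, ← Real.rpow_natCast (‖x‖ ^ _), ← Real.rpow_mul hr.le, mul_div_assoc,
      ← Real.rpow_sub_one hr.ne']
    ring_nf
  have hs : 1 ≤ √(1 + (ε * ‖x‖ ^ (1 - (n : ℝ))) ^ 2) :=
    Real.one_le_sqrt.mpr (le_add_of_nonneg_right (sq_nonneg _))
  have ha : 0 ≤ ε * ‖x‖ ^ (1 - (n : ℝ)) := by positivity
  rw [graphMeanCurv_green hn hx, abs_neg, abs_div, abs_mul, abs_of_nonneg (pow_nonneg ha 3),
    abs_of_pos (by positivity : 0 < ‖x‖ * √(1 + (ε * ‖x‖ ^ (1 - (n : ℝ))) ^ 2) ^ 3)]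
  calc |(n : ℝ) - 1| * (ε * ‖x‖ ^ (1 - (n : ℝ))) ^ 3
        / (‖x‖ * √(1 + (ε * ‖x‖ ^ (1 - (n : ℝ))) ^ 2) ^ 3)
      ≤ |(n : ℝ) - 1| * (ε * ‖x‖ ^ (1 - (n : ℝ))) ^ 3 / (‖x‖ * 1) := by
        gcongr
        exact one_le_pow₀ hs
    _ = |(n : ℝ) - 1| * ε ^ 3 * ‖x‖ ^ ((2 : ℝ) - 3 * n) := by
        rw [mul_one, mul_div_assoc, hpow, mul_assoc]

end GreenGraph

/-- **Mean curvature of a Green's-function graph.** Let `n ≥ 3`. There are `C > 0` and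
`ε₀ ∈ (0,1)` such that for every `ε ∈ (0, ε₀]` the function
`v_ε(x) = (ε/(n−2)) ‖x‖^{2−n}` on the annulus `ε^{3/(3n−2)} ≤ ‖x‖ ≤ 1` has
`|∇v_ε| ≤ 1` and its graph has mean curvature `|H[v_ε](x)| ≤ C ε³ ‖x‖^{2−3n}` there. -/
theorem green_function_graph_mean_curvature (n : ℕ) (hn : 3 ≤ n) :
    ∃ C : ℝ, 0 < C ∧ ∃ ε₀ : ℝ, 0 < ε₀ ∧ ε₀ < 1 ∧
      ∀ ε : ℝ, 0 < ε → ε ≤ ε₀ →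
        ∀ x : Euc n, ε ^ ((3 : ℝ) / (3 * n - 2)) ≤ ‖x‖ → ‖x‖ ≤ 1 →
          ‖gradient (fun y : Euc n =>
              (ε / ((n : ℝ) - 2)) * ‖y‖ ^ ((2 : ℝ) - n)) x‖ ≤ 1 ∧
          |graphMeanCurv (fun y : Euc n =>
              (ε / ((n : ℝ) - 2)) * ‖y‖ ^ ((2 : ℝ) - n)) x| ≤
            C * ε ^ 3 * ‖x‖ ^ ((2 : ℝ) - 3 * n) := by
  have hn3 : (3 : ℝ) ≤ n := by exact_mod_cast hn
  have hn2 : (n : ℝ) ≠ 2 := by linarith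
  refine ⟨|(n : ℝ) - 1|, abs_pos.mpr (by linarith : (0 : ℝ) < n - 1).ne', 1 / 2, by norm_num,
    by norm_num, fun ε hε hε₀ x hx _ => ?_⟩
  have hx0 : x ≠ 0 := norm_pos_iff.mp ((Real.rpow_pos_of_pos hε _).trans_le hx)
  refine ⟨?_, abs_graphMeanCurv_green_le hn2 hε.le hx0⟩
  rw [norm_gradient_green hn2 hε.le hx0]
  exact green_slope_le_one (by linarith) hε (by linarith) hx

end
end
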